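/- Let F• : Y• → X• be a morphism of simplicial sets with X• 2-Segal. The following are equivalent: (1) for every n ≥ 1 and every 0 ≤ i < j ≤ n the outer square with corners Y_n, Y_{{0,...,i,j,...,n}}, X_{{i,...,j}}, X_{{i,j}} (where Y_n → Y_{{i,...,j}} → X_{{i,...,j}} is one composite and Y_{{0,...,i,j,...,n}} → Y_{{i,j}} → X_{{i,j}} the other) is a pullback of sets; (2) Y• is 2-Segal and for every n ≥ 1 the square Y_n → Y_{{0,n}}, Y_n → X_n, Y_{{0,n}} → X_{{0,n}}, X_n → X_{{0,n}} is a pullback of sets. -/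

import Mathlib

open CategoryTheory Simplicial SimplexCategory Opposite

namespace RelSegal

/-- The morphism `[m] ⟶ [n]` in the simplex category determined by a monotone `ℕ`-valued map. -/
def natHom (m n : ℕ) (f : ℕ → ℕ) (hf : Monotone f) (h : f m ≤ n) :
    (⦋m⦌ : SimplexCategory) ⟶ ⦋n⦌ :=
  SimplexCategory.mkHom
    { toFun := fun k => ⟨f k.1, by have := hf (Nat.lt_succ_iff.mp k.2); omega⟩
      monotone' := fun a b hab => by
        simp only [Fin.mk_le_mk]; exact hf hab }

/-- Restriction of simplices along a morphism of the simplex category. -/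
def rmap (X : SSet) {m n : ℕ} (φ : (⦋m⦌ : SimplexCategory) ⟶ ⦋n⦌) :
    X.obj (op ⦋n⦌) → X.obj (op ⦋m⦌) := X.map φ.op

/-- The inclusion of the vertex `i` of `[n]`. -/
def vert (n i : ℕ) (h : i ≤ n) : (⦋0⦌ : SimplexCategory) ⟶ ⦋n⦌ :=
  natHom 0 n (fun _ => i) monotone_const h

/-- The inclusion of the edge `{i,j}` of `[n]`. -/
def edge (n i j : ℕ) (hij : i ≤ j) (hj : j ≤ n) : (⦋1⦌ : SimplexCategory) ⟶ ⦋n⦌ :=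
  natHom 1 n (fun k => i + k * (j - i))
    (fun a b hab => by
      have := Nat.mul_le_mul_right (j - i) hab
      show i + a * (j - i) ≤ i + b * (j - i); omega)
    (by show i + 1 * (j - i) ≤ n; omega)

/-- The inclusion of the interval `{i, i+1, …, j}` of `[n]`. -/
def interval (n i j : ℕ) (hij : i ≤ j) (hj : j ≤ n) : (⦋j - i⦌ : SimplexCategory) ⟶ ⦋n⦌ :=
  natHom (j - i) n (fun k => i + k) (fun a b hab => by show i + a ≤ i + b; omega)
    (by show i + (j - i) ≤ n; omega)

/-- A commutative square of sets which is a pullback: the canonical map into the fibre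
product is a bijection. -/
def IsSetPullback {A B C D : Type*} (p : A → B) (q : A → C) (g : B → D) (h : C → D) : Prop :=
  (∀ a, g (p a) = h (q a)) ∧ ∀ b c, g b = h c → ∃! a, p a = b ∧ q a = c

/-- A simplicial set is `1`-Segal if for every `n ≥ 2` the Segal map
`X_n → X_1 ×_{X_0} ⋯ ×_{X_0} X_1` is a bijection (injectivity together with
surjectivity onto the compatible families). -/
def Is1Segal (X : SSet) : Prop :=
  ∀ n, 2 ≤ n →
    (∀ x y : X.obj (op ⦋n⦌),
      (∀ i (hi : i + 1 ≤ n),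
        rmap X (edge n i (i + 1) (by omega) hi) x = rmap X (edge n i (i + 1) (by omega) hi) y) →
      x = y) ∧
    (∀ f : ∀ i, i + 1 ≤ n → X.obj (op ⦋1⦌),
      (∀ i (h1 : i + 1 ≤ n) (h2 : (i + 1) + 1 ≤ n),
        rmap X (vert 1 1 le_rfl) (f i h1) = rmap X (vert 1 0 (by omega)) (f (i + 1) h2)) →
      ∃ x : X.obj (op ⦋n⦌), ∀ i (hi : i + 1 ≤ n),
        rmap X (edge n i (i + 1) (by omega) hi) x = f i hi)

/-- The inclusion of the subset `{0, …, i, j, …, n}` of `[n]`. -/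
def outer (n i j : ℕ) (hij : i < j) (hj : j ≤ n) :
    (⦋n - j + i + 1⦌ : SimplexCategory) ⟶ ⦋n⦌ :=
  natHom (n - j + i + 1) n (fun k => if k ≤ i then k else k + (j - i - 1))
    (fun a b hab => by dsimp only; split_ifs <;> omega)
    (by try dsimp only
        split_ifs <;> omega)

/-- A simplicial set is `2`-Segal if for every `n ≥ 3` and `0 ≤ i < j ≤ n` the map
`X_n → X_{{i,…,j}} ×_{X_{{i,j}}} X_{{0,…,i,j,…,n}}` is a bijection. -/
def Is2Segal (X : SSet) : Prop :=
  ∀ n i j (_ : 3 ≤ n) (hij : i < j) (hj : j ≤ n),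
    IsSetPullback
      (rmap X (interval n i j hij.le hj))
      (rmap X (outer n i j hij hj))
      (rmap X (edge (j - i) 0 (j - i) (Nat.zero_le _) le_rfl))
      (rmap X (edge (n - j + i + 1) i (i + 1) (by omega) (by omega)))

/-!
The relative square of `(1)` for `(n, i, j)` is the vertical pasting of the 2-Segal square of `Y`
for `(n, i, j)` on top of the naturality square of `F` along the long edge of `[j - i]`. Once the
squares of `(2)` are pullbacks, the pasting lemma makes the first square a pullback exactly when
the second one is; the squares of `(2)` themselves are the relative squares for `(n, 0, n)`, and
the 2-Segal squares with `j = i + 1` or `(i, j) = (0, n)`, which are not covered by `n ≥ 3`, have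
two parallel sides that are isomorphisms.
-/

universe u

lemma natHom_comp_natHom {a b c : ℕ} {f g : ℕ → ℕ} (hf : Monotone f) (hg : Monotone g)
    (hfa : f a ≤ b) (hgb : g b ≤ c) :
    natHom a b f hf hfa ≫ natHom b c g hg hgb =
      natHom a c (g ∘ f) (hg.comp hf) ((hg hfa).trans hgb) := rfl

lemma natHom_congr {m n : ℕ} {f g : ℕ → ℕ} (hf : Monotone f) (hg : Monotone g) (hfm : f m ≤ n)
    (hgm : g m ≤ n) (hfg : ∀ k ≤ m, f k = g k) : natHom m n f hf hfm = natHom m n g hg hgm := by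
  ext k : 3
  exact Fin.ext (hfg k (Nat.lt_succ_iff.mp k.2))

lemma natHom_eq_id {n : ℕ} {f : ℕ → ℕ} (hf : Monotone f) (hfn : f n ≤ n)
    (hid : ∀ k ≤ n, f k = k) : natHom n n f hf hfn = 𝟙 ⦋n⦌ :=
  natHom_congr hf monotone_id hfn le_rfl hid

lemma isIso_natHom {m n : ℕ} (hmn : m = n) {f : ℕ → ℕ} (hf : Monotone f) (hfm : f m ≤ n)
    (hid : ∀ k ≤ m, f k = k) : IsIso (natHom m n f hf hfm) := by
  subst hmn
  rw [natHom_eq_id hf hfm hid]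
  infer_instance

lemma edge_comp_outer {n i j : ℕ} (hij : i < j) (hj : j ≤ n) :
    edge (n - j + i + 1) i (i + 1) (by omega) (by omega) ≫ outer n i j hij hj =
      edge n i j hij.le hj := by
  refine (natHom_comp_natHom _ _ _ _).trans (natHom_congr _ _ _ _ fun k hk => ?_)
  interval_cases k <;> simp
  omega

lemma edge_comp_interval {n i j : ℕ} (hij : i ≤ j) (hj : j ≤ n) :
    edge (j - i) 0 (j - i) (Nat.zero_le _) le_rfl ≫ interval n i j hij hj = edge n i j hij hj := by
  refine (natHom_comp_natHom _ _ _ _).trans (natHom_congr _ _ _ _ fun k hk => ?_)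
  interval_cases k <;> simp

lemma interval_zero_self (n : ℕ) : interval n 0 n (Nat.zero_le n) le_rfl = 𝟙 ⦋n⦌ :=
  natHom_eq_id _ _ fun k _ => Nat.zero_add k

lemma isIso_outer_succ {n i : ℕ} (hi : i + 1 ≤ n) :
    IsIso (outer n i (i + 1) (Nat.lt_succ_self i) hi) :=
  isIso_natHom (by omega) _ _ fun k _ => by split_ifs <;> omega

lemma isIso_edge_zero {m k : ℕ} (hkm : k ≤ m) (hm : m = 1) (hk : k = 1) :
    IsIso (edge m 0 k (Nat.zero_le k) hkm) :=
  isIso_natHom hm.symm _ _ fun t _ => by subst hk; simp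

lemma _root_.CategoryTheory.IsPullback.comp_fst_of_isIso {C : Type*} [Category C]
    {P W W' V Z : C} {fst : P ⟶ W} {snd : P ⟶ V} {e : W ⟶ W'} {f : W' ⟶ Z} {g : V ⟶ Z} [IsIso e]
    (h : IsPullback fst snd (e ≫ f) g) : IsPullback (fst ≫ e) snd f g := by
  simpa only [Category.comp_id] using
    h.paste_horiz (IsPullback.of_horiz_isIso (g := 𝟙 Z) ⟨(Category.comp_id _).symm⟩)

lemma isSetPullback_iff_isPullback {A B C D : Type u} (p : A → B) (q : A → C) (g : B → D)
    (h : C → D) : IsSetPullback p q g h ↔ IsPullback (↾p) (↾q) (↾g) (↾h) := by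
  rw [Limits.Types.isPullback_iff]
  constructor
  · rintro ⟨comm, uniq⟩
    refine ⟨by ext a; exact comm a, fun a a' ⟨hp, hq⟩ => ?_, fun b c hbc => ?_⟩
    · obtain ⟨_, _, hu⟩ := uniq (p a') (q a') (comm a')
      exact (hu a ⟨hp, hq⟩).trans (hu a' ⟨rfl, rfl⟩).symm
    · obtain ⟨a, ha, -⟩ := uniq b c hbc
      exact ⟨a, ha⟩
  · rintro ⟨comm, inj, surj⟩
    refine ⟨fun a => types_congr_hom comm a, fun b c hbc => ?_⟩
    obtain ⟨a, ha⟩ := surj b c hbc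
    exact ⟨a, ha, fun a' ha' => inj a' a ⟨ha'.1.trans ha.1.symm, ha'.2.trans ha.2.symm⟩⟩

@[simp]
lemma ofHom_rmap (X : SSet.{u}) {m n : ℕ} (φ : (⦋m⦌ : SimplexCategory) ⟶ ⦋n⦌) :
    ↾(rmap X φ) = X.map φ.op := rfl

@[simp]
lemma ofHom_app_rmap {X Y : SSet.{u}} (F : Y ⟶ X) {m n : ℕ}
    (φ : (⦋m⦌ : SimplexCategory) ⟶ ⦋n⦌) :
    (↾fun y => F.app (op ⦋m⦌) (rmap Y φ y)) = Y.map φ.op ≫ F.app (op ⦋m⦌) := rfl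

section SegalSquare

variable (Y : SSet.{u})

lemma map_interval_zero_self (n : ℕ) :
    Y.map (interval n 0 n (Nat.zero_le n) le_rfl).op = 𝟙 (Y.obj (op ⦋n⦌)) := by
  rw [interval_zero_self]
  exact Y.map_id _

lemma map_outer_comp_map_edge {n i j : ℕ} (hij : i < j) (hj : j ≤ n) :
    Y.map (outer n i j hij hj).op ≫
        Y.map (edge (n - j + i + 1) i (i + 1) (by omega) (by omega)).op =
      Y.map (interval n i j hij.le hj).op ≫
        Y.map (edge (j - i) 0 (j - i) (Nat.zero_le _) le_rfl).op := by
  simp only [← Y.map_comp, ← op_comp, edge_comp_outer, edge_comp_interval]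

lemma isPullback_segal_succ {n i : ℕ} (hi : i + 1 ≤ n) :
    IsPullback (Y.map (outer n i (i + 1) (Nat.lt_succ_self i) hi).op)
      (Y.map (interval n i (i + 1) (Nat.le_succ i) hi).op)
      (Y.map (edge (n - (i + 1) + i + 1) i (i + 1) (Nat.le_succ i) (by omega)).op)
      (Y.map (edge (i + 1 - i) 0 (i + 1 - i) (Nat.zero_le _) le_rfl).op) :=
  have := isIso_outer_succ hi
  have := isIso_edge_zero le_rfl (Nat.add_sub_cancel_left i 1) (Nat.add_sub_cancel_left i 1)
  IsPullback.of_horiz_isIso ⟨map_outer_comp_map_edge Y _ hi⟩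

lemma isPullback_segal_zero_self {n : ℕ} (hn : 0 < n) :
    IsPullback (Y.map (outer n 0 n hn le_rfl).op)
      (Y.map (interval n 0 n (Nat.zero_le n) le_rfl).op)
      (Y.map (edge (n - n + 0 + 1) 0 (0 + 1) (Nat.zero_le _) (by omega)).op)
      (Y.map (edge (n - 0) 0 (n - 0) (Nat.zero_le _) le_rfl).op) :=
  have : IsIso (interval n 0 n (Nat.zero_le n) le_rfl) :=
    isIso_natHom rfl _ _ fun k _ => Nat.zero_add k
  have := isIso_edge_zero (m := n - n + 0 + 1) (k := 0 + 1) (by omega) (by omega) rfl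
  IsPullback.of_vert_isIso ⟨map_outer_comp_map_edge Y hn le_rfl⟩

end SegalSquare

section RelativeSegalSquare

variable {X Y : SSet.{u}} (F : Y ⟶ X)

lemma isPullback_relSegal_iff {n i j : ℕ} (hij : i < j) (hj : j ≤ n)
    (hF : IsPullback (Y.map (edge (j - i) 0 (j - i) (Nat.zero_le _) le_rfl).op)
      (F.app (op ⦋j - i⦌)) (F.app (op ⦋1⦌))
      (X.map (edge (j - i) 0 (j - i) (Nat.zero_le _) le_rfl).op)) :
    IsPullback (Y.map (outer n i j hij hj).op)
        (Y.map (interval n i j hij.le hj).op ≫ F.app (op ⦋j - i⦌))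
        (Y.map (edge (n - j + i + 1) i (i + 1) (by omega) (by omega)).op ≫ F.app (op ⦋1⦌))
        (X.map (edge (j - i) 0 (j - i) (Nat.zero_le _) le_rfl).op) ↔
      IsPullback (Y.map (outer n i j hij hj).op) (Y.map (interval n i j hij.le hj).op)
        (Y.map (edge (n - j + i + 1) i (i + 1) (by omega) (by omega)).op)
        (Y.map (edge (j - i) 0 (j - i) (Nat.zero_le _) le_rfl).op) :=
  IsPullback.paste_vert_iff hF (map_outer_comp_map_edge Y hij hj)

/- `⦋n - n + 0 + 1⦌` is `⦋1⦌` only propositionally, so the edge `{0, 1}` of it is an isomorphism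
rather than the identity. -/
lemma isPullback_naturality_of_relSegal_zero_self {n : ℕ} (hn : 0 < n)
    (h : IsPullback (Y.map (outer n 0 n hn le_rfl).op)
      (Y.map (interval n 0 n (Nat.zero_le n) le_rfl).op ≫ F.app (op ⦋n⦌))
      (Y.map (edge (n - n + 0 + 1) 0 (0 + 1) (Nat.zero_le _) (by omega)).op ≫ F.app (op ⦋1⦌))
      (X.map (edge n 0 n (Nat.zero_le _) le_rfl).op)) :
    IsPullback (Y.map (edge n 0 n (Nat.zero_le _) le_rfl).op) (F.app (op ⦋n⦌)) (F.app (op ⦋1⦌))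
      (X.map (edge n 0 n (Nat.zero_le _) le_rfl).op) := by
  have := isIso_edge_zero (m := n - n + 0 + 1) (k := 0 + 1) (by omega) (by omega) rfl
  rw [map_interval_zero_self, Category.id_comp] at h
  have h' := h.comp_fst_of_isIso
  rwa [← Y.map_comp, ← op_comp, edge_comp_outer hn le_rfl] at h'

end RelativeSegalSquare

/-- for a morphism `F : Y ⟶ X` of simplicial sets with `X` 2-Segal, the
relative 2-Segal squares (corners `Y_n`, `Y_{{0,…,i,j,…,n}}`, `X_{{i,…,j}}`, `X_{{i,j}}`)
are all pullbacks of sets iff `Y` is 2-Segal and all the squares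
(`Y_n`, `Y_{{0,n}}`, `X_n`, `X_{{0,n}}`) are pullbacks of sets. -/
theorem statement4 (X Y : SSet) (F : Y ⟶ X) :
    (∀ n i j (_ : 1 ≤ n) (hij : i < j) (hj : j ≤ n),
      IsSetPullback
        (rmap Y (outer n i j hij hj))
        (fun y => F.app (op ⦋j - i⦌) (rmap Y (interval n i j hij.le hj) y))
        (fun y => F.app (op ⦋1⦌)
          (rmap Y (edge (n - j + i + 1) i (i + 1) (by omega) (by omega)) y))
        (rmap X (edge (j - i) 0 (j - i) (Nat.zero_le _) le_rfl)))
    ↔ (Is2Segal Y ∧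
        ∀ n (_ : 1 ≤ n),
          IsSetPullback
            (rmap Y (edge n 0 n (Nat.zero_le _) le_rfl))
            (F.app (op ⦋n⦌))
            (F.app (op ⦋1⦌))
            (rmap X (edge n 0 n (Nat.zero_le _) le_rfl))) := by
  simp only [Is2Segal, isSetPullback_iff_isPullback, ofHom_rmap, ofHom_app_rmap,
    TypeCat.ofHom_eq]
  constructor
  · intro hrel
    have hnat : ∀ n, 1 ≤ n → IsPullback (Y.map (edge n 0 n (Nat.zero_le _) le_rfl).op)
        (F.app (op ⦋n⦌)) (F.app (op ⦋1⦌)) (X.map (edge n 0 n (Nat.zero_le _) le_rfl).op) :=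
      fun n hn => isPullback_naturality_of_relSegal_zero_self F hn (hrel n 0 n hn hn le_rfl)
    refine ⟨fun n i j _ hij hj => ?_, hnat⟩
    exact ((isPullback_relSegal_iff F hij hj (hnat (j - i) (by omega))).1
      (hrel n i j (by omega) hij hj)).flip
  · rintro ⟨hsegal, hnat⟩ n i j hn hij hj
    rw [isPullback_relSegal_iff F hij hj (hnat (j - i) (by omega))]
    by_cases hsucc : j = i + 1
    · subst hsucc
      exact isPullback_segal_succ Y hj
    by_cases hends : i = 0 ∧ j = n
    · obtain ⟨rfl, rfl⟩ := hends
      exact isPullback_segal_zero_self Y hij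
    exact (hsegal n i j (by omega) hij hj).flip

end RelSegal
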